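/- arXiv:1710.00481 — 4 statements merged into one kernel-verified Lean document; each statement's English description precedes it below -/
import Mathlib

section
/- Let n ≥ 2, r ≥ 2 and k be integers, and let k_1,…,k_r be integers with k_i ≥ 2 for all i and k_1 + ⋯ + k_r = k − 1. Then S(n+1, k−5) + 1 ≥ Σ_{i=1}^{r} S(n+1, k_i−2). -/
/-- The fewnomial-type bound `S(m,j)`: `S(m,0) = 1`, `S(m,1) = m+1`, and
`S(m,j) = ((e²+3)/4)·2^{j(j−1)/2}·mʲ` for `j ≥ 2`. -/
noncomputable def S (m j : ℕ) : ℝ :=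
  if j = 0 then 1
  else if j = 1 then (m : ℝ) + 1
  else ((Real.exp 1) ^ 2 + 3) / 4 * (2 : ℝ) ^ (j * (j - 1) / 2) * (m : ℝ) ^ j

lemma hc : (7:ℝ)/4 ≤ ((Real.exp 1) ^ 2 + 3)/4 := by
  nlinarith [Real.exp_one_gt_d9]

lemma S_eq {j : ℕ} (m : ℕ) (hj : 2 ≤ j) :
    S m j = ((Real.exp 1) ^ 2 + 3) / 4 * (2 : ℝ) ^ (j * (j - 1) / 2) * (m : ℝ) ^ j := by
  rw [S, if_neg (by omega), if_neg (by omega)]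

lemma S_ge_one {m : ℕ} (hm : 1 ≤ m) (j : ℕ) : 1 ≤ S m j := by
  rcases Nat.lt_or_ge j 2 with hj | hj
  · interval_cases j <;> simp [S]
  · rw [S_eq m hj]
    have h1 : (1:ℝ) ≤ (2:ℝ) ^ (j * (j-1)/2) := one_le_pow₀ (by norm_num)
    have h2 : (1:ℝ) ≤ (m:ℝ) ^ j := one_le_pow₀ (by exact_mod_cast hm)
    have h3 : (1:ℝ) ≤ ((Real.exp 1) ^ 2 + 3)/4 := by linarith [hc]
    have h4 := mul_le_mul (mul_le_mul h3 h1 zero_le_one (by linarith)) h2 zero_le_one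
      (by positivity)
    simpa using h4

lemma tri (a b : ℕ) : (a+b)*((a+b)-1)/2 = a*(a-1)/2 + (b*(b-1)/2 + a*b) := by
  obtain ⟨x, hx⟩ := Nat.even_mul_pred_self a
  obtain ⟨y, hy⟩ := Nat.even_mul_pred_self b
  obtain ⟨z, hz⟩ := Nat.even_mul_pred_self (a+b)
  have key : (a+b)*((a+b)-1) = a*(a-1) + (b*(b-1) + 2*(a*b)) := by
    rcases a with _ | a
    · simp
    rcases b with _ | b
    · simp
    have e1 : a + 1 + (b + 1) - 1 = a + b + 1 := by omega
    simp only [Nat.succ_sub_one, e1]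
    ring
  omega

lemma S_mul {m : ℕ} (a b : ℕ) (ha : 2 ≤ a) (hb : 2 ≤ b) :
    S m (a+b) = S m a * ((2:ℝ) ^ (b*(b-1)/2 + a*b) * (m:ℝ)^b) := by
  rw [S_eq m ha, S_eq m (show 2 ≤ a + b by omega), tri a b, pow_add, pow_add]
  ring

lemma hc2 : ((Real.exp 1) ^ 2 + 3)/4 ≤ 3 := by
  nlinarith [Real.exp_one_lt_d9, Real.exp_pos 1]

lemma S_zero (m : ℕ) : S m 0 = 1 := by simp [S]

lemma S_one (m : ℕ) : S m 1 = (m:ℝ) + 1 := by simp [S]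

lemma L1 {m : ℕ} (hm : 3 ≤ m) (a b : ℕ) : S m a + S m b ≤ S m (a+b) + 1 := by
  have hm3 : (3:ℝ) ≤ (m:ℝ) := by exact_mod_cast hm
  have hm1 : 1 ≤ m := by omega
  rcases Nat.eq_zero_or_pos a with rfl | ha0
  · simp only [S_zero, Nat.zero_add]; linarith
  rcases Nat.eq_zero_or_pos b with rfl | hb0
  · simp [S_zero]
  rcases Nat.lt_or_ge a 2 with ha | ha <;> rcases Nat.lt_or_ge b 2 with hb | hb
  · -- a = 1, b = 1
    have ha1 : a = 1 := by omega
    have hb1 : b = 1 := by omega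
    subst ha1; subst hb1
    have h2 : S m (1+1) = ((Real.exp 1) ^ 2 + 3)/4 * 2 * (m:ℝ)^2 := by
      rw [show (1:ℕ)+1 = 2 from rfl, S_eq m (by norm_num)]; norm_num
    rw [S_one, h2]
    nlinarith [hc, sq_nonneg ((m:ℝ) - 3)]
  · -- a = 1, b ≥ 2
    have ha1 : a = 1 := by omega
    subst ha1
    have key : S m (1+b) = S m b * ((2:ℝ)^b * (m:ℝ)) := by
      rw [S_eq m hb, S_eq m (show 2 ≤ 1 + b by omega), tri 1 b]
      simp only [pow_add]
      norm_num
      ring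
    have hS : 1 ≤ S m b := S_ge_one hm1 b
    have h2b : (4:ℝ) ≤ (2:ℝ)^b := by
      calc (4:ℝ) = 2^2 := by norm_num
      _ ≤ 2^b := pow_le_pow_right₀ (by norm_num) hb
    rw [S_one, key]
    nlinarith [mul_nonneg (sub_nonneg.2 hS) (show (0:ℝ) ≤ (2:ℝ)^b * m - 1 by nlinarith)]
  · -- a ≥ 2, b = 1
    have hb1 : b = 1 := by omega
    subst hb1
    have key : S m (a+1) = S m a * ((2:ℝ)^a * (m:ℝ)) := by
      rw [S_eq m ha, S_eq m (show 2 ≤ a + 1 by omega), tri a 1]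
      simp only [pow_add]
      norm_num
      ring
    have hS : 1 ≤ S m a := S_ge_one hm1 a
    have h2a : (4:ℝ) ≤ (2:ℝ)^a := by
      calc (4:ℝ) = 2^2 := by norm_num
      _ ≤ 2^a := pow_le_pow_right₀ (by norm_num) ha
    rw [S_one, key]
    nlinarith [mul_nonneg (sub_nonneg.2 hS) (show (0:ℝ) ≤ (2:ℝ)^a * m - 1 by nlinarith)]
  · -- a ≥ 2, b ≥ 2
    have key := S_mul (m := m) a b ha hb
    set Y : ℝ := (2:ℝ)^(b*(b-1)/2) * (m:ℝ)^b with hYdef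
    have hkey : S m (a+b) = S m a * ((2:ℝ)^(a*b) * Y) := by
      rw [key, pow_add]; ring
    have hSa : 1 ≤ S m a := S_ge_one hm1 a
    have hY : (1:ℝ) ≤ Y := by
      have h1 : (1:ℝ) ≤ (2:ℝ) ^ (b*(b-1)/2) := one_le_pow₀ (by norm_num)
      have h2 : (1:ℝ) ≤ (m:ℝ) ^ b := one_le_pow₀ (by exact_mod_cast hm1)
      nlinarith
    have hSb : S m b ≤ 3 * Y := by
      rw [S_eq m hb]
      have := hc2
      nlinarith
    have h16 : (16:ℝ) ≤ (2:ℝ)^(a*b) := by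
      calc (16:ℝ) = 2^4 := by norm_num
      _ ≤ 2^(a*b) := pow_le_pow_right₀ (by norm_num) (Nat.mul_le_mul ha hb)
    have hprod : S m a * ((2:ℝ)^(a*b) * Y) ≥ S m a * (16 * Y) := by
      apply mul_le_mul_of_nonneg_left _ (by linarith)
      apply mul_le_mul_of_nonneg_right h16 (by linarith)
    have hxy : (S m a - 1) * (Y - 1) ≥ 0 :=
      mul_nonneg (by linarith) (by linarith)
    rw [hkey]
    nlinarith

lemma L3 {m : ℕ} (hm : 3 ≤ m) (t : ℕ) : S m t + 2 ≤ S m (t+2) := by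
  have hm3 : (3:ℝ) ≤ (m:ℝ) := by exact_mod_cast hm
  have hm1 : 1 ≤ m := by omega
  have hm2 : (9:ℝ) ≤ (m:ℝ)^2 := by nlinarith
  rcases Nat.lt_or_ge t 2 with ht | ht
  · interval_cases t
    · have h2 : S m (0+2) = ((Real.exp 1) ^ 2 + 3)/4 * 2 * (m:ℝ)^2 := by
        rw [show (0:ℕ)+2 = 2 from rfl, S_eq m (by norm_num)]; norm_num
      rw [S_zero, h2]
      nlinarith [hc]
    · have h3 : S m (1+2) = ((Real.exp 1) ^ 2 + 3)/4 * 8 * (m:ℝ)^3 := by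
        rw [show (1:ℕ)+2 = 3 from rfl, S_eq m (by norm_num)]; norm_num
      have hmm : (m:ℝ) ≤ (m:ℝ)^3 := by nlinarith
      rw [S_one, h3]
      nlinarith [hc]
  · have key := S_mul (m := m) t 2 ht (by norm_num)
    have hS : 1 ≤ S m t := S_ge_one hm1 t
    have h2 : (2:ℝ) ≤ (2:ℝ)^(2*(2-1)/2 + t*2) := by
      calc (2:ℝ) = 2^1 := by norm_num
      _ ≤ _ := pow_le_pow_right₀ (by norm_num) (by omega)
    have h18 : (18:ℝ) ≤ (2:ℝ)^(2*(2-1)/2 + t*2) * (m:ℝ)^2 := by nlinarith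
    have := mul_le_mul_of_nonneg_left h18 (show (0:ℝ) ≤ S m t by linarith)
    rw [key]
    nlinarith

lemma L2 {m : ℕ} (hm : 3 ≤ m) (a b : ℕ) : S m a + S m b + 1 ≤ S m (a+b+2) := by
  have h1 := L1 hm a b
  have h2 := L3 hm (a+b)
  linarith

lemma sum_le {m : ℕ} (hm : 3 ≤ m) :
    ∀ (r : ℕ) (j : Fin (r+2) → ℕ),
      ∑ i, S m (j i) ≤ S m ((∑ i, j i) + 2*r) + 1 := by
  intro r
  induction r with
  | zero =>
    intro j
    rw [Fin.sum_univ_two (f := fun i => S m (j i)), Fin.sum_univ_two]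
    simpa using L1 hm (j 0) (j 1)
  | succ r ih =>
    intro j
    rw [Fin.sum_univ_castSucc (f := fun i => S m (j i)), Fin.sum_univ_castSucc (f := j)]
    have h1 := ih (fun i => j i.castSucc)
    have h2 := L2 hm ((∑ i : Fin (r+2), j i.castSucc) + 2*r) (j (Fin.last _))
    have h3 : (∑ i : Fin (r+2), j i.castSucc) + 2*r + j (Fin.last _) + 2
        = (∑ i : Fin (r+2), j i.castSucc) + j (Fin.last _) + 2*(r+1) := by ring
    rw [h3] at h2
    linarith

theorem stmt5 (n r k : ℕ) (hn : 2 ≤ n) (hr : 2 ≤ r)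
    (ks : Fin r → ℕ) (hks : ∀ i, 2 ≤ ks i) (hsum : ∑ i, ks i = k - 1) :
    S (n + 1) (k - 5) + 1 ≥ ∑ i, S (n + 1) (ks i - 2) := by
  obtain ⟨r', rfl⟩ : ∃ r', r = r' + 2 := ⟨r - 2, by omega⟩
  have hm : 3 ≤ n + 1 := by omega
  have h := sum_le hm r' (fun i => ks i - 2)
  set T := ∑ i : Fin (r'+2), (ks i - 2) with hT
  have hsum2 : T + 2*(r'+2) = k - 1 := by
    rw [← hsum, hT]
    calc (∑ i : Fin (r'+2), (ks i - 2)) + 2*(r'+2)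
        = ∑ i : Fin (r'+2), (ks i - 2 + 2) := by
          rw [Finset.sum_add_distrib]
          simp [Finset.card_univ]
          ring
      _ = ∑ i : Fin (r'+2), ks i :=
          Finset.sum_congr rfl (fun i _ => by have := hks i; omega)
  have harg : T + 2*r' = k - 5 := by omega
  rw [harg] at h
  exact h
end

section
/- Let n, k ≥ 1 be integers, let A ∈ ℝ^{n×(n+k)} have columns a_1,…,a_{n+k}, let Â ∈ ℝ^{(n+1)×(n+k)} be the matrix whose first row is (1,…,1) and whose bottom n rows form A, let d := rank(Â) − 1, and let B ∈ ℝ^{(n+k)×(n+k−d−1)} be any matrix whose columns form a basis of the right nullspace of Â (i.e., of {v ∈ ℝ^{n+k} : Âv = 0}). Then A is pyramidal if and only if some row of B is the zero vector. -/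
/-- The matrix `Â`: a top row of all ones, with bottom rows forming `A`
(whose columns are `a_1, …, a_N ∈ ℝⁿ`). -/
def Ahat {n N : ℕ} (a : Fin N → Fin n → ℝ) : Matrix (Fin (n + 1)) (Fin N) ℝ :=
  Matrix.of fun i j => Fin.cases (motive := fun _ => ℝ) 1 (fun i' => a j i') i

/-- The dimension of the affine span of a set of points in ℝⁿ. -/
noncomputable def affDim {n : ℕ} (s : Set (Fin n → ℝ)) : ℕ :=
  Module.finrank ℝ (affineSpan ℝ s).direction

/-- The columns of `B` form a basis of the right nullspace `{v : Âv = 0}` of `Ah`. -/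
def ColsBasisOfNullspace {n N r : ℕ} (Ah : Matrix (Fin (n + 1)) (Fin N) ℝ)
    (B : Matrix (Fin N) (Fin r) ℝ) : Prop :=
  LinearIndependent ℝ (fun l : Fin r => fun j : Fin N => B j l) ∧
    Submodule.span ℝ (Set.range (fun l : Fin r => fun j : Fin N => B j l)) =
      LinearMap.ker Ah.mulVecLin

/-- `A` is pyramidal: some column `a_j` can be removed so that the remaining columns
lie in an affine subspace of dimension `d(A) − 1`, where `d(A) = rank(Â) − 1`. -/
def Pyramidal {n N : ℕ} (a : Fin N → Fin n → ℝ) : Prop :=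
  ∃ j : Fin N, (affDim (a '' {i | i ≠ j}) : ℤ) ≤ (((Ahat a).rank - 1 : ℕ) : ℤ) - 1

/-! Nullspace vectors of `Â` are the linear relations `∑ vᵢ âᵢ = 0` among its columns
`âᵢ = (1, aᵢ)`, so all of them vanish at `j` iff `âⱼ` is not in the span of the other columns,
i.e. iff deleting column `j` lowers the rank of `Â` by one. The lifted points lie on the
hyperplane `x₀ = 1`, so the columns `âᵢ`, `i ≠ j`, span a space of dimension one more than the
affine span of the `aᵢ`; hence that rank drop is exactly pyramidality with apex `aⱼ`. Finally the
columns of `B` span the nullspace, so a row of `B` vanishes iff all nullspace vectors vanish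
there. -/

open Module Submodule

section LinearAlgebra

variable {K V : Type*} [Field K] [AddCommGroup V] [Module K V]

theorem finrank_span_eq_finrank_vectorSpan_add_one [FiniteDimensional K V] {φ : V →ₗ[K] K}
    {s : Set V} (hs : s.Nonempty) (hφ : ∀ x ∈ s, φ x = 1) :
    finrank K (span K s) = finrank K (vectorSpan K s) + 1 := by
  obtain ⟨x₀, hx₀⟩ := hs
  have hφ_vectorSpan : vectorSpan K s ≤ LinearMap.ker φ := by
    rw [vectorSpan_def, span_le]
    rintro _ ⟨x, hx, y, hy, rfl⟩
    simp [hφ x hx, hφ y hy]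
  have hx₀_notMem : x₀ ∉ vectorSpan K s := fun h => by simpa [hφ x₀ hx₀] using hφ_vectorSpan h
  have hspan : span K s = vectorSpan K s ⊔ K ∙ x₀ := by
    refine le_antisymm (span_le.2 fun x hx => ?_) (sup_le ?_ (span_mono (by simpa using hx₀)))
    · rw [← sub_add_cancel x x₀]
      exact add_mem (mem_sup_left (vsub_mem_vectorSpan K hx hx₀))
        (mem_sup_right (mem_span_singleton_self x₀))
    · rw [vectorSpan_def, span_le]
      rintro _ ⟨x, hx, y, hy, rfl⟩
      exact sub_mem (subset_span hx) (subset_span hy)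
  rw [hspan, finrank_sup_span_singleton hx₀_notMem]

theorem forall_mem_ker_linearCombination_eq_zero_iff {ι : Type*} [Fintype ι] [DecidableEq ι]
    (c : ι → V) (j : ι) :
    (∀ v ∈ LinearMap.ker (Fintype.linearCombination K c), v j = 0) ↔
      c j ∉ span K (c '' {i | i ≠ j}) := by
  constructor
  · intro h hj
    obtain ⟨l, hl, hlc⟩ := (Finsupp.mem_span_image_iff_linearCombination K).1 hj
    have hlj : l j = 0 := (Finsupp.mem_supported' K l).1 hl j (by simp)
    have := h (Pi.single j 1 - ⇑l) (by
      simp [Fintype.linearCombination_apply, sub_smul, Finset.sum_sub_distrib, ← hlc,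
        Finsupp.linearCombination_apply, Finsupp.sum_fintype])
    simp [hlj] at this
  · intro hj v hv
    by_contra hvj
    refine hj ?_
    have hsum : v j • c j = -∑ i ∈ Finset.univ.erase j, v i • c i := by
      rw [eq_neg_iff_add_eq_zero, Finset.add_sum_erase _ (fun i => v i • c i) (Finset.mem_univ j)]
      exact hv
    rw [← inv_smul_smul₀ hvj (c j), hsum]
    exact smul_mem _ _ <| neg_mem <| sum_mem fun i hi =>
      smul_mem _ _ (subset_span ⟨i, Finset.ne_of_mem_erase hi, rfl⟩)

end LinearAlgebra

theorem forall_mem_span_range_apply_eq_zero_iff {R ι ι' : Type*} [Semiring R] (w : ι' → ι → R)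
    (i : ι) : (∀ v ∈ span R (Set.range w), v i = 0) ↔ ∀ l, w l i = 0 := by
  show span R (Set.range w) ≤ LinearMap.ker (LinearMap.proj i) ↔ _
  rw [span_le, Set.range_subset_iff]
  rfl

theorem Matrix.mulVecLin_eq_linearCombination {R m n : Type*} [CommSemiring R] [Fintype n]
    (M : Matrix m n R) : M.mulVecLin = Fintype.linearCombination R M.col := by
  ext v i
  simp [Matrix.mulVec, dotProduct, Fintype.linearCombination_apply, Finset.sum_apply, mul_comm]

theorem AffineMap.finrank_vectorSpan_image_of_injective {K V₁ V₂ P₁ P₂ : Type*} [Ring K]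
    [AddCommGroup V₁] [Module K V₁] [AddTorsor V₁ P₁] [AddCommGroup V₂] [Module K V₂]
    [AddTorsor V₂ P₂] (f : P₁ →ᵃ[K] P₂) (hf : Function.Injective f) (s : Set P₁) :
    finrank K (vectorSpan K (f '' s)) = finrank K (vectorSpan K s) := by
  rw [← AffineMap.map_vectorSpan]
  exact (equivMapOfInjective f.linear (f.linear_injective_iff.2 hf) _).finrank_eq.symm

def consOneAffineMap (K : Type*) [Ring K] (n : ℕ) : (Fin n → K) →ᵃ[K] (Fin (n + 1) → K) where
  toFun x := Fin.cons (1 : K) x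
  linear := LinearMap.vecCons 0 LinearMap.id
  map_vadd' p v := funext <| Fin.cases (by simp) (by simp)

theorem consOneAffineMap_injective (K : Type*) [Ring K] (n : ℕ) :
    Function.Injective (consOneAffineMap K n) :=
  Fin.cons_right_injective (α := fun _ => K) 1

theorem col_Ahat {n N : ℕ} (a : Fin N → Fin n → ℝ) : (Ahat a).col = consOneAffineMap ℝ n ∘ a := by
  ext j i
  exact Fin.cases rfl (fun _ => rfl) i

theorem finrank_span_col_Ahat_image {n N : ℕ} (a : Fin N → Fin n → ℝ) {S : Set (Fin N)}
    (hS : S.Nonempty) : finrank ℝ (span ℝ ((Ahat a).col '' S)) = affDim (a '' S) + 1 := by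
  rw [col_Ahat, Set.image_comp, finrank_span_eq_finrank_vectorSpan_add_one (φ := LinearMap.proj 0)
      ((hS.image a).image _) (by rintro _ ⟨x, -, rfl⟩; rfl),
    AffineMap.finrank_vectorSpan_image_of_injective _ (consOneAffineMap_injective ℝ n), affDim,
    direction_affineSpan]

theorem affDim_image_ne_le_iff_col_notMem_span {n N : ℕ} (hN : 2 ≤ N) (a : Fin N → Fin n → ℝ) (j : Fin N) :
    (affDim (a '' {i | i ≠ j}) : ℤ) ≤ (((Ahat a).rank - 1 : ℕ) : ℤ) - 1 ↔
      (Ahat a).col j ∉ span ℝ ((Ahat a).col '' {i | i ≠ j}) := by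
  have : Nontrivial (Fin N) := Fin.nontrivial_iff_two_le.2 hN
  have hS := finrank_span_col_Ahat_image a (S := {i | i ≠ j}) (exists_ne j)
  have hcols : Set.range (Ahat a).col = insert ((Ahat a).col j) ((Ahat a).col '' {i | i ≠ j}) := by
    rw [← Set.image_insert_eq, ← Set.image_univ]
    congr
    ext i
    simp [eq_or_ne]
  have hrank := (Ahat a).rank_eq_finrank_span_cols
  rw [hcols] at hrank
  by_cases h : (Ahat a).col j ∈ span ℝ ((Ahat a).col '' {i | i ≠ j})
  · rw [span_insert_eq_span h] at hrank
    simp only [h, not_true_eq_false, iff_false]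
    omega
  · rw [span_insert, sup_comm, finrank_sup_span_singleton h] at hrank
    simp only [h, not_false_eq_true, iff_true]
    omega

theorem stmt6 (n k : ℕ) (hn : 1 ≤ n) (hk : 1 ≤ k)
    (a : Fin (n + k) → Fin n → ℝ)
    (B : Matrix (Fin (n + k)) (Fin (n + k - ((Ahat a).rank - 1) - 1)) ℝ)
    (hB : ColsBasisOfNullspace (Ahat a) B) :
    Pyramidal a ↔ ∃ i : Fin (n + k), ∀ l, B i l = 0 := by
  refine exists_congr fun j => ?_
  rw [affDim_image_ne_le_iff_col_notMem_span (by omega), ← forall_mem_ker_linearCombination_eq_zero_iff,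
    ← Matrix.mulVecLin_eq_linearCombination, ← hB.2, forall_mem_span_range_apply_eq_zero_iff]
end

section
/- Let m ≥ 1 be an integer, let e_1,…,e_{m+1} ∈ ℝ, let (u_{i,0}, u_{i,1}) ∈ ℝ² for i = 1,…,m+1, let Δ := {y ∈ ℝ : u_{i,0} + u_{i,1}·y > 0 for all i ∈ {1,…,m+1}}, and define H : Δ → ℝ by H(y) := Π_{i=1}^{m+1} (u_{i,0} + u_{i,1}·y)^{e_i} − 1 (real powers of positive bases). Then the set of non-degenerate roots of H in Δ (points y ∈ Δ with H(y) = 0 and H'(y) ≠ 0) has cardinality at most m + 1. -/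
/-!
On `Δ` the function `H + 1 = ∏ᵢ ℓᵢ ^ eᵢ`, with `ℓᵢ y = u0ᵢ + u1ᵢ y`, is positive with logarithmic
derivative `∑ᵢ eᵢ u1ᵢ / ℓᵢ = p / ∏ᵢ ℓᵢ`, where `p` is a polynomial of degree at most `m`.
Hence on the interval `Δ` the critical points of `H` are roots of `p`. A non-degenerate root forces
`p ≠ 0`, so there are at most `m` critical points, and by Rolle's theorem any two roots of `H` in
`Δ` are separated by one of them.
-/

open Polynomial Finset

theorem finite_and_ncard_le_of_interleaved {α : Type*} [LinearOrder α] {s : Set α}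
    (t : Finset α) (h : ∀ x ∈ s, ∀ y ∈ s, x < y → ∃ z ∈ t, x < z ∧ z < y) :
    s.Finite ∧ s.ncard ≤ t.card + 1 := by
  have hcard : ∀ u : Finset α, ↑u ⊆ s → u.card ≤ t.card + 1 := fun u hu =>
    card_le_of_interleaved fun x hx y hy hxy _ => h x (hu hx) y (hu hy) hxy
  have hs : s.Finite := by
    by_contra hinf
    obtain ⟨u, hu, hu_card⟩ := Set.Infinite.exists_subset_card_eq hinf (t.card + 2)
    have := hcard u hu
    omega
  exact ⟨hs, by simpa [Set.ncard_eq_toFinset_card s hs] using hcard hs.toFinset (by simp)⟩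

theorem exists_deriv_eq_zero_of_ordConnected {s : Set ℝ} [hs : s.OrdConnected] {f : ℝ → ℝ}
    (hf : ContinuousOn f s) {a b : ℝ} (ha : a ∈ s) (hb : b ∈ s) (hab : a < b)
    (hfab : f a = f b) : ∃ c ∈ s, a < c ∧ c < b ∧ deriv f c = 0 := by
  obtain ⟨c, hc, hc'⟩ := exists_deriv_eq_zero hab (hf.mono (hs.out ha hb)) hfab
  exact ⟨c, hs.out ha hb (Set.Ioo_subset_Icc_self hc), hc.1, hc.2, hc'⟩

theorem ordConnected_setOf_forall_affine_pos {ι : Type*} (u0 u1 : ι → ℝ) :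
    {y : ℝ | ∀ i, 0 < u0 i + u1 i * y}.OrdConnected := by
  refine ⟨fun a ha b hb y hy i => ?_⟩
  have := ha i
  have := hb i
  rcases le_total 0 (u1 i) with h | h <;> nlinarith [hy.1, hy.2]

section AffinePowerProduct

variable {ι : Type*} [Fintype ι] [DecidableEq ι] (e u0 u1 : ι → ℝ)

noncomputable def logDerivNumerator : ℝ[X] :=
  ∑ i, C (e i * u1 i) * ∏ j ∈ univ.erase i, (C (u0 j) + C (u1 j) * X)

theorem eval_logDerivNumerator (y : ℝ) :
    (logDerivNumerator e u0 u1).eval y =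
      ∑ i, e i * u1 i * ∏ j ∈ univ.erase i, (u0 j + u1 j * y) := by
  simp [logDerivNumerator, eval_finsetSum, eval_prod]

theorem natDegree_logDerivNumerator_le :
    (logDerivNumerator e u0 u1).natDegree ≤ Fintype.card ι - 1 := by
  refine natDegree_sum_le_of_forall_le _ _ fun i _ => (natDegree_C_mul_le _ _).trans ?_
  refine (natDegree_prod_le (univ.erase i) _).trans
    ((sum_le_card_nsmul _ _ 1 fun j _ => ?_).trans ?_)
  · rw [add_comm]
    exact natDegree_linear_le
  · simp [card_erase_of_mem]

variable {e u0 u1} {y : ℝ}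

theorem sum_div_affine_eq_eval_logDerivNumerator_div (hy : ∀ i, 0 < u0 i + u1 i * y) :
    ∑ i, e i * u1 i / (u0 i + u1 i * y) =
      (logDerivNumerator e u0 u1).eval y / ∏ i, (u0 i + u1 i * y) := by
  rw [eq_div_iff (prod_pos fun i _ => hy i).ne', sum_mul, eval_logDerivNumerator]
  refine sum_congr rfl fun i _ => ?_
  rw [← mul_prod_erase univ _ (mem_univ i), div_mul_eq_mul_div, mul_div_assoc,
    mul_div_cancel_left₀ _ (hy i).ne']

theorem hasDerivAt_prod_rpow_affine (hy : ∀ i, 0 < u0 i + u1 i * y) :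
    HasDerivAt (fun y => ∏ i, (u0 i + u1 i * y) ^ e i)
      ((∏ i, (u0 i + u1 i * y) ^ e i) * ∑ i, e i * u1 i / (u0 i + u1 i * y)) y := by
  have hfactor : ∀ i, HasDerivAt (fun y => (u0 i + u1 i * y) ^ e i)
      ((u0 i + u1 i * y) ^ e i * (e i * u1 i / (u0 i + u1 i * y))) y := by
    intro i
    have hlin : HasDerivAt (fun y => u0 i + u1 i * y) (u1 i) y := by
      simpa using ((hasDerivAt_id y).const_mul (u1 i)).const_add (u0 i)
    convert hlin.rpow_const (p := e i) (Or.inl (hy i).ne') using 1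
    rw [Real.rpow_sub_one (hy i).ne']
    ring
  refine (HasDerivAt.fun_finsetProd (u := univ) fun i _ => hfactor i).congr_deriv ?_
  rw [mul_sum]
  refine sum_congr rfl fun i _ => ?_
  rw [smul_eq_mul, ← mul_assoc, prod_erase_mul univ (fun j => (u0 j + u1 j * y) ^ e j) (mem_univ i)]

theorem deriv_prod_rpow_affine_eq_zero_iff (hy : ∀ i, 0 < u0 i + u1 i * y) :
    deriv (fun y => ∏ i, (u0 i + u1 i * y) ^ e i) y = 0 ↔
      (logDerivNumerator e u0 u1).eval y = 0 := by
  rw [(hasDerivAt_prod_rpow_affine hy).deriv, sum_div_affine_eq_eval_logDerivNumerator_div hy,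
    mul_eq_zero, div_eq_zero_iff]
  have hpow : 0 < ∏ i, (u0 i + u1 i * y) ^ e i := prod_pos fun i _ => Real.rpow_pos_of_pos (hy i) _
  have hprod : 0 < ∏ i, (u0 i + u1 i * y) := prod_pos fun i _ => hy i
  simp [hpow.ne', hprod.ne']

end AffinePowerProduct

theorem stmt10_general (m : ℕ)
    (e : Fin (m + 1) → ℝ) (u0 u1 : Fin (m + 1) → ℝ)
    (Δ : Set ℝ) (hΔ : Δ = {y : ℝ | ∀ i, 0 < u0 i + u1 i * y})
    (H : ℝ → ℝ) (hH : H = fun y => (∏ i, (u0 i + u1 i * y) ^ (e i)) - 1) :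
    {y : ℝ | y ∈ Δ ∧ H y = 0 ∧ deriv H y ≠ 0}.Finite ∧
      {y : ℝ | y ∈ Δ ∧ H y = 0 ∧ deriv H y ≠ 0}.ncard ≤ m + 1 := by
  subst hΔ hH
  set p := logDerivNumerator e u0 u1
  have hcrit : ∀ y ∈ {y : ℝ | ∀ i, 0 < u0 i + u1 i * y},
      deriv (fun y => (∏ i, (u0 i + u1 i * y) ^ e i) - 1) y = 0 ↔ p.eval y = 0 :=
    fun y hy => by rw [deriv_sub_const]; exact deriv_prod_rpow_affine_eq_zero_iff hy
  have hroots : p.roots.toFinset.card ≤ m := by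
    have := natDegree_logDerivNumerator_le e u0 u1
    simp only [Fintype.card_fin, add_tsub_cancel_right] at this
    exact (Multiset.toFinset_card_le _).trans ((card_roots' p).trans this)
  have := ordConnected_setOf_forall_affine_pos u0 u1
  refine (finite_and_ncard_le_of_interleaved p.roots.toFinset ?_).imp_right (·.trans (by omega))
  rintro x ⟨hx, hHx, hx'⟩ y ⟨hy, hHy, -⟩ hxy
  have hp : p ≠ 0 := fun h => hx' ((hcrit x hx).2 (by simp [h]))
  have hcont : ContinuousOn (fun y => (∏ i, (u0 i + u1 i * y) ^ e i) - 1)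
      {y : ℝ | ∀ i, 0 < u0 i + u1 i * y} := fun y hy =>
    ((hasDerivAt_prod_rpow_affine hy).sub_const 1).continuousAt.continuousWithinAt
  obtain ⟨z, hz, hxz, hzy, hz'⟩ :=
    exists_deriv_eq_zero_of_ordConnected hcont hx hy hxy (hHx.trans hHy.symm)
  exact ⟨z, by simpa [hp] using (hcrit z hz).1 hz', hxz, hzy⟩

theorem stmt10 (m : ℕ) (hm : 1 ≤ m)
    (e : Fin (m + 1) → ℝ) (u0 u1 : Fin (m + 1) → ℝ)
    (Δ : Set ℝ) (hΔ : Δ = {y : ℝ | ∀ i, 0 < u0 i + u1 i * y})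
    (H : ℝ → ℝ) (hH : H = fun y => (∏ i, (u0 i + u1 i * y) ^ (e i)) - 1) :
    {y : ℝ | y ∈ Δ ∧ H y = 0 ∧ deriv H y ≠ 0}.Finite ∧
      {y : ℝ | y ∈ Δ ∧ H y = 0 ∧ deriv H y ≠ 0}.ncard ≤ m + 1 :=
  stmt10_general m e u0 u1 Δ hΔ H hH
end

section
/- Let n ≥ 2 and k ≥ 4 be integers and set M := min{n+1, ⌊(k−2)/3⌋}. Then Σ_{i=1}^{M} S(n+2−i, k−2−3i) + M ≤ S(n+1, k−4). -/
lemma c_ge_two : (2:ℝ) ≤ ((Real.exp 1) ^ 2 + 3) / 4 := by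
  have h := Real.exp_one_gt_d9
  nlinarith [h]

lemma S_two (m j : ℕ) (h : 2 ≤ j) :
    S m j = ((Real.exp 1) ^ 2 + 3) / 4 * (2 : ℝ) ^ (j * (j - 1) / 2) * (m : ℝ) ^ j := by
  rw [S, if_neg (by omega), if_neg (by omega)]

lemma Sge1 (m j : ℕ) (hm : 1 ≤ m) : (1:ℝ) ≤ S m j := by
  have hm' : (1:ℝ) ≤ (m:ℝ) := by exact_mod_cast hm
  unfold S
  split_ifs with h0 h1
  · exact le_rfl
  · linarith
  · have hc := c_ge_two
    have h2 : (1:ℝ) ≤ (2:ℝ) ^ (j * (j - 1) / 2) := one_le_pow₀ (by norm_num)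
    have h3 : (1:ℝ) ≤ (m:ℝ) ^ j := one_le_pow₀ hm'
    have h4 := mul_le_mul (mul_le_mul hc h2 (by norm_num) (by linarith)) h3
      (by norm_num) (by positivity)
    linarith

lemma geo (M : ℕ) : ∑ i ∈ Finset.Icc 1 M, (1/2:ℝ)^i = 1 - (1/2)^M := by
  induction M with
  | zero => simp
  | succ M ih =>
      rw [Finset.sum_Icc_succ_top (by omega), ih, pow_succ]
      ring

lemma key (n m j i a : ℕ) (hn : 2 ≤ n) (hi : 1 ≤ i) (hm : 1 ≤ m) (hmn : m ≤ n + 1)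
    (ha : a = j + 3 * i - 2) :
    (S m j + 1) * 2 ^ i ≤ S (n + 1) a := by
  have hc : (2:ℝ) ≤ ((Real.exp 1) ^ 2 + 3) / 4 := c_ge_two
  have hn' : (2:ℝ) ≤ (n:ℝ) := by exact_mod_cast hn
  have hm' : (1:ℝ) ≤ (m:ℝ) := by exact_mod_cast hm
  have hmn' : (m:ℝ) ≤ (n:ℝ) + 1 := by exact_mod_cast hmn
  have hcast : ((n + 1 : ℕ) : ℝ) = (n:ℝ) + 1 := by push_cast; ring
  obtain ⟨i, rfl⟩ : ∃ i', i = i' + 1 := ⟨i - 1, by omega⟩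
  match j with
  | 0 =>
    rw [S_zero]
    have haa : a = 3 * i + 1 := by omega
    subst haa
    match i with
    | 0 =>
      rw [show 3 * 0 + 1 = 1 by rfl, S_one, hcast]
      norm_num
      linarith
    | (i + 1) =>
      set a := 3 * (i + 1) + 1 with hadef
      have ha2 : 2 ≤ a := by omega
      rw [S_two _ _ ha2, hcast]
      have hT : i + 2 ≤ a * (a - 1) / 2 := by
        rw [Nat.le_div_iff_mul_le (by norm_num)]
        have e1 : a - 1 = 3 * i + 3 := by omega
        rw [e1, hadef]
        nlinarith
      have h2T : (2:ℝ) ^ (i + 2) ≤ (2:ℝ) ^ (a * (a - 1) / 2) :=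
        pow_le_pow_right₀ (by norm_num) hT
      have hpow : (1:ℝ) ≤ ((n:ℝ) + 1) ^ a := one_le_pow₀ (by linarith)
      have h1 : (1 + 1) * (2:ℝ) ^ (i + 1 + 1) = 2 * 2 ^ (i + 2) := by ring_nf
      rw [h1]
      calc (2:ℝ) * 2 ^ (i + 2) ≤ ((Real.exp 1) ^ 2 + 3) / 4 * (2:ℝ) ^ (a * (a - 1) / 2) :=
            mul_le_mul hc h2T (by positivity) (by linarith)
        _ ≤ ((Real.exp 1) ^ 2 + 3) / 4 * (2:ℝ) ^ (a * (a - 1) / 2) * ((n:ℝ) + 1) ^ a :=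
            le_mul_of_one_le_right (by positivity) hpow
  | 1 =>
    rw [S_one]
    have haa : a = 3 * i + 2 := by omega
    subst haa
    set a := 3 * i + 2 with hadef
    have ha2 : 2 ≤ a := by omega
    rw [S_two _ _ ha2, hcast]
    have hT : i + 1 ≤ a * (a - 1) / 2 := by
      rw [Nat.le_div_iff_mul_le (by norm_num)]
      have e1 : a - 1 = 3 * i + 1 := by omega
      rw [e1, hadef]
      nlinarith
    have h2T : (2:ℝ) ^ (i + 1) ≤ (2:ℝ) ^ (a * (a - 1) / 2) :=
      pow_le_pow_right₀ (by norm_num) hT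
    have hm2 : (m:ℝ) + 1 + 1 ≤ ((n:ℝ) + 1) ^ 2 := by nlinarith
    have hp : ((n:ℝ) + 1) ^ 2 ≤ ((n:ℝ) + 1) ^ a :=
      pow_le_pow_right₀ (by linarith) (by omega)
    calc ((m:ℝ) + 1 + 1) * 2 ^ (i + 1)
        ≤ ((n:ℝ) + 1) ^ a * (2:ℝ) ^ (a * (a - 1) / 2) :=
          mul_le_mul (hm2.trans hp) h2T (by positivity) (by positivity)
      _ = 1 * ((2:ℝ) ^ (a * (a - 1) / 2) * ((n:ℝ) + 1) ^ a) := by ring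
      _ ≤ ((Real.exp 1) ^ 2 + 3) / 4 * ((2:ℝ) ^ (a * (a - 1) / 2) * ((n:ℝ) + 1) ^ a) := by
          apply mul_le_mul_of_nonneg_right (by linarith) (by positivity)
      _ = ((Real.exp 1) ^ 2 + 3) / 4 * (2:ℝ) ^ (a * (a - 1) / 2) * ((n:ℝ) + 1) ^ a := by ring
  | (j + 2) =>
    have haa : a = j + 3 * i + 3 := by omega
    subst haa
    rw [S_two m (j+2) (by omega), S_two (n+1) (j + 3*i + 3) (by omega), hcast]
    set c := ((Real.exp 1) ^ 2 + 3) / 4 with hcdef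
    set T1 := (j + 2) * ((j + 2) - 1) / 2 with hT1
    set T2 := (j + 3 * i + 3) * ((j + 3 * i + 3) - 1) / 2 with hT2
    have hTdiff : T1 + (i + 2) ≤ T2 := by
      have hev : 2 ∣ (j + 2) * ((j + 2) - 1) := by
        rw [show (j + 2) - 1 = j + 1 from rfl, Nat.mul_comm]
        exact (Nat.even_mul_succ_self (j + 1)).two_dvd
      rw [hT1, hT2, Nat.le_div_iff_mul_le (by norm_num), Nat.add_mul,
        Nat.div_mul_cancel hev]
      have e1 : (j + 2) - 1 = j + 1 := by omega
      have e2 : (j + 3 * i + 3) - 1 = j + 3 * i + 2 := by omega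
      rw [e1, e2]
      nlinarith
    have h2T : (2:ℝ) ^ T1 * (2:ℝ) ^ (i + 2) ≤ (2:ℝ) ^ T2 := by
      rw [← pow_add]
      exact pow_le_pow_right₀ (by norm_num) hTdiff
    have hmj : (m:ℝ) ^ (j + 2) ≤ ((n:ℝ) + 1) ^ (j + 3 * i + 3) := by
      calc (m:ℝ) ^ (j + 2) ≤ ((n:ℝ) + 1) ^ (j + 2) :=
            pow_le_pow_left₀ (by positivity) hmn' _
        _ ≤ ((n:ℝ) + 1) ^ (j + 3 * i + 3) := pow_le_pow_right₀ (by linarith) (by omega)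
    have hQ : (1:ℝ) ≤ (2:ℝ) ^ T1 := one_le_pow₀ (by norm_num)
    have hmj1 : (1:ℝ) ≤ (m:ℝ) ^ (j + 2) := one_le_pow₀ hm'
    have hX : (1:ℝ) ≤ c * (2:ℝ) ^ T1 * (m:ℝ) ^ (j + 2) := by
      have h4 := mul_le_mul (mul_le_mul hc hQ (by norm_num) (by linarith)) hmj1
        (by norm_num) (by positivity)
      linarith
    have hps : (2:ℝ) ^ (i + 2) = (2:ℝ) ^ (i + 1) * 2 := by rw [pow_succ]
    have h2pos : (0:ℝ) < (2:ℝ) ^ (i + 1) := by positivity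
    calc (c * (2:ℝ) ^ T1 * (m:ℝ) ^ (j + 2) + 1) * 2 ^ (i + 1)
        ≤ (c * (2:ℝ) ^ T1 * (m:ℝ) ^ (j + 2) + c * (2:ℝ) ^ T1 * (m:ℝ) ^ (j + 2)) * 2 ^ (i + 1) := by
          apply mul_le_mul_of_nonneg_right (by linarith) (by positivity)
      _ = (c * (m:ℝ) ^ (j + 2)) * ((2:ℝ) ^ T1 * (2:ℝ) ^ (i + 2)) := by rw [hps]; ring
      _ ≤ (c * (m:ℝ) ^ (j + 2)) * (2:ℝ) ^ T2 := by
          apply mul_le_mul_of_nonneg_left h2T (by positivity)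
      _ = (c * (2:ℝ) ^ T2) * (m:ℝ) ^ (j + 2) := by ring
      _ ≤ (c * (2:ℝ) ^ T2) * ((n:ℝ) + 1) ^ (j + 3 * i + 3) := by
          apply mul_le_mul_of_nonneg_left hmj (by positivity)
      _ = c * (2:ℝ) ^ T2 * ((n:ℝ) + 1) ^ (j + 3 * i + 3) := by ring

theorem stmt17 (n k : ℕ) (hn : 2 ≤ n) (hk : 4 ≤ k)
    (M : ℕ) (hM : M = min (n + 1) ((k - 2) / 3)) :
    (∑ i ∈ Finset.Icc 1 M, S (n + 2 - i) (k - 2 - 3 * i)) + M ≤ S (n + 1) (k - 4) := by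
  have hR1 : (1:ℝ) ≤ S (n + 1) (k - 4) := Sge1 _ _ (by omega)
  have hR0 : (0:ℝ) ≤ S (n + 1) (k - 4) := by linarith
  have hstep : ∀ i ∈ Finset.Icc 1 M, S (n + 2 - i) (k - 2 - 3 * i) + 1
      ≤ S (n + 1) (k - 4) * (1/2:ℝ)^i := by
    intro i hi
    simp only [Finset.mem_Icc] at hi
    have h3i : 3 * i + 2 ≤ k := by omega
    have hin : i ≤ n + 1 := by omega
    have hkey := key n (n + 2 - i) (k - 2 - 3 * i) i (k - 4) hn hi.1 (by omega) (by omega)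
      (by omega)
    have h2 : (0:ℝ) < 2 ^ i := by positivity
    rw [one_div_pow, mul_one_div]
    exact (le_div_iff₀ h2).mpr hkey
  calc (∑ i ∈ Finset.Icc 1 M, S (n + 2 - i) (k - 2 - 3 * i)) + (M:ℝ)
      = ∑ i ∈ Finset.Icc 1 M, (S (n + 2 - i) (k - 2 - 3 * i) + 1) := by
        rw [Finset.sum_add_distrib, Finset.sum_const, Nat.card_Icc]
        simp
    _ ≤ ∑ i ∈ Finset.Icc 1 M, S (n + 1) (k - 4) * (1/2:ℝ)^i := Finset.sum_le_sum hstep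
    _ = S (n + 1) (k - 4) * ∑ i ∈ Finset.Icc 1 M, (1/2:ℝ)^i := by rw [Finset.mul_sum]
    _ ≤ S (n + 1) (k - 4) * 1 := by
        apply mul_le_mul_of_nonneg_left _ hR0
        rw [geo]
        have : (0:ℝ) ≤ (1/2:ℝ)^M := by positivity
        linarith
    _ = S (n + 1) (k - 4) := mul_one _
end
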